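/- arXiv:1605.02809 — 2 statements merged into one kernel-verified Lean document; each statement's English description precedes it below -/
import Mathlib

section
/- Let r ≥ 1, let ψ : ℝ^r → ℝ be twice continuously differentiable with ψ(𝟏) = 1, let β ∈ ℝ^r, γ ≥ 0, α_S > 0, α_I > 0, α_R ≥ 0 with α_S + α_I + α_R = 1, and T > 0. For x with ∂_iψ(x) ≠ 0 for all i, define κ̄_{jl}(x) = ψ(x)·∂²_{jl}ψ(x)/(∂_jψ(x)·∂_lψ(x)). Suppose S : [0,T] → ℝ, SI, SS, Θ : [0,T] → ℝ^r satisfy, for all t ∈ [0,T] and all j: S(t) > 0, ψ(Θ(t)) > 0, ∂_jψ(Θ(t)) ≠ 0, ∂_jψ(𝟏) > 0, and S'(t) = −∑_l β_l·SI_l(t), SI_j'(t) = ∑_l β_l·κ̄_{jl}(Θ(t))·(SI_l(t)/S(t))·(SS_j(t) − SI_j(t)) − (β_j + γ)·SI_j(t), SS_j'(t) = −2·∑_l β_l·κ̄_{jl}(Θ(t))·SI_l(t)·SS_j(t)/S(t), Θ_j'(t) = −β_j·SI_j(t)/(α_S·∂_jψ(Θ(t))), with initial conditions S(0) = α_S,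 SI_j(0) = α_S·α_I·∂_jψ(𝟏), SS_j(0) = α_S²·∂_jψ(𝟏), Θ(0) = 𝟏. Then for all t ∈ [0,T] and all j, Θ_j'(t) = −β_j·Θ_j(t) + β_j·α_S·∂_jψ(Θ(t))/∂_jψ(𝟏) + γ·(1 − Θ_j(t)) + β_j·α_R. -/
/-- Partial derivative of `ψ : (Fin r → ℝ) → ℝ` in the `j`-th coordinate at `x`. -/
noncomputable def pd {r : ℕ} (j : Fin r) (ψ : (Fin r → ℝ) → ℝ) (x : Fin r → ℝ) : ℝ :=
  deriv (fun t => ψ (Function.update x j t)) (x j)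

/-! Along a solution three quantities are conserved: `S - α_S ψ(Θ)`, `SS_j / (∂_jψ(Θ))²`, and
`β_j SI_j / (α_S ∂_jψ(Θ)) - β_jΘ_j + β_jα_S ∂_jψ(Θ)/∂_jψ(𝟏) + γ(1 - Θ_j) + β_jα_R`.
The first follows from the chain rule, since `∂_lψ(Θ) Θ_l' = -β_l SI_l / α_S`. Once `S = α_S ψ(Θ)`,
the cross term of the `SI` and `SS` equations collapses: `∑_l β_l κ̄_{jl}(Θ) SI_l / S = -(∂_jψ(Θ))' / ∂_jψ(Θ)`,
which makes the other two derivatives vanish. The initial conditions fix the constants, so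
`SS_j = α_S² (∂_jψ(Θ))² / ∂_jψ(𝟏)` and the third quantity is `0`, which is the edge-based equation
because `Θ_j' = -β_j SI_j / (α_S ∂_jψ(Θ))`. -/

open Set

theorem constant_of_hasDerivAt_zero {E : Type*} [NormedAddCommGroup E] [NormedSpace ℝ E]
    {f : ℝ → E} {a b : ℝ} (hf : ∀ t ∈ Icc a b, HasDerivAt f 0 t) :
    ∀ t ∈ Icc a b, f t = f a :=
  constant_of_has_deriv_right_zero (fun t ht => (hf t ht).continuousAt.continuousWithinAt)
    fun t ht => (hf t (Ico_subset_Icc_self ht)).hasDerivWithinAt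

section PartialDerivative

variable {r : ℕ} {ψ : (Fin r → ℝ) → ℝ}

theorem pd_eq_fderiv {x : Fin r → ℝ} (j : Fin r) (h : DifferentiableAt ℝ ψ x) :
    pd j ψ x = fderiv ℝ ψ x (Pi.single j 1) := by
  have hψ : HasFDerivAt ψ (fderiv ℝ ψ x) (Function.update x j (x j)) := by
    rw [Function.update_eq_self]; exact h.hasFDerivAt
  exact (hψ.comp_hasDerivAt (x j) (hasDerivAt_update x j (x j))).deriv

theorem contDiff_pd {m n : WithTop ℕ∞} (hψ : ContDiff ℝ n ψ) (hmn : m + 1 ≤ n) (j : Fin r) :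
    ContDiff ℝ m (pd j ψ) := by
  have hd : Differentiable ℝ ψ := hψ.differentiable (by rintro rfl; simp at hmn)
  rw [show pd j ψ = fun x => fderiv ℝ ψ x (Pi.single j 1) from
    funext fun x => pd_eq_fderiv j (hd x)]
  exact (hψ.fderiv_right hmn).clm_apply contDiff_const

theorem DifferentiableAt.hasDerivAt_comp_sum_pd {Θ : ℝ → Fin r → ℝ} {V : Fin r → ℝ} {t : ℝ}
    (hψ : DifferentiableAt ℝ ψ (Θ t)) (hΘ : HasDerivAt Θ V t) :
    HasDerivAt (fun s => ψ (Θ s)) (∑ l, pd l ψ (Θ t) * V l) t := by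
  have hV : fderiv ℝ ψ (Θ t) V = ∑ l, pd l ψ (Θ t) * V l := by
    conv_lhs => rw [← Finset.univ_sum_single V]
    simp only [map_sum, pd_eq_fderiv _ hψ, mul_comm _ (V _)]
    refine Finset.sum_congr rfl fun l _ => ?_
    rw [← smul_eq_mul, ← map_smul, ← Pi.single_smul, smul_eq_mul, mul_one]
  exact hV ▸ hψ.hasFDerivAt.comp_hasDerivAt t hΘ

end PartialDerivative

section EdgeBased

variable {r : ℕ} {ψ : (Fin r → ℝ) → ℝ} {β : Fin r → ℝ} {γ αS K T : ℝ} {S : ℝ → ℝ}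
  {SI SS Θ : ℝ → Fin r → ℝ}

noncomputable def kbar (ψ : (Fin r → ℝ) → ℝ) (j l : Fin r) (x : Fin r → ℝ) : ℝ :=
  ψ x * pd l (pd j ψ) x / (pd j ψ x * pd l ψ x)

theorem sum_mul_kbar_mul_div {x : Fin r → ℝ} (hψx : ψ x ≠ 0) (j : Fin r) (v : Fin r → ℝ) :
    ∑ l, β l * kbar ψ j l x * (v l / (αS * ψ x)) =
      -(∑ l, pd l (pd j ψ) x * (-(β l * v l) / (αS * pd l ψ x))) / pd j ψ x := by
  rw [← Finset.sum_neg_distrib, Finset.sum_div]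
  refine Finset.sum_congr rfl fun l _ => ?_
  unfold kbar
  -- the degenerate cases hold because both sides divide by zero
  rcases eq_or_ne (pd l ψ x) 0 with hl | hl
  · simp [hl]
  rcases eq_or_ne (pd j ψ x) 0 with hj | hj
  · simp [hj]
  rcases eq_or_ne αS 0 with hα | hα
  · simp [hα]
  field_simp

theorem S_eq_mul_comp (hψ : Differentiable ℝ ψ) (hαS : αS ≠ 0)
    (hpd : ∀ t ∈ Icc 0 T, ∀ l, pd l ψ (Θ t) ≠ 0)
    (hS : ∀ t ∈ Icc 0 T, HasDerivAt S (-(∑ l, β l * SI t l)) t)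
    (hΘ : ∀ t ∈ Icc 0 T, HasDerivAt Θ (fun l => -(β l * SI t l) / (αS * pd l ψ (Θ t))) t)
    (hS0 : S 0 = αS * ψ (Θ 0)) :
    ∀ t ∈ Icc 0 T, S t = αS * ψ (Θ t) := by
  have hderiv : ∀ t ∈ Icc 0 T, HasDerivAt (fun s => S s - αS * ψ (Θ s)) 0 t := by
    intro t ht
    refine ((hS t ht).sub (((hψ _).hasDerivAt_comp_sum_pd (hΘ t ht)).const_mul αS)).congr_deriv ?_
    rw [Finset.mul_sum, ← Finset.sum_neg_distrib, ← Finset.sum_sub_distrib]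
    refine Finset.sum_eq_zero fun l _ => ?_
    field_simp [hpd t ht l]
    ring
  intro t ht
  linarith [constant_of_hasDerivAt_zero hderiv t ht]

theorem SS_eq_mul_sq_pd_comp {j : Fin r} (hP : Differentiable ℝ (pd j ψ))
    (hψ : ∀ t ∈ Icc 0 T, ψ (Θ t) ≠ 0) (hPne : ∀ t ∈ Icc 0 T, pd j ψ (Θ t) ≠ 0)
    (hSψ : ∀ t ∈ Icc 0 T, S t = αS * ψ (Θ t))
    (hSS : ∀ t ∈ Icc 0 T, HasDerivAt (fun s => SS s j)
      (-2 * ∑ l, β l * kbar ψ j l (Θ t) * SI t l * SS t j / S t) t)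
    (hΘ : ∀ t ∈ Icc 0 T, HasDerivAt Θ (fun l => -(β l * SI t l) / (αS * pd l ψ (Θ t))) t)
    (hSS0 : SS 0 j = K * pd j ψ (Θ 0) ^ 2) :
    ∀ t ∈ Icc 0 T, SS t j = K * pd j ψ (Θ t) ^ 2 := by
  have hderiv : ∀ t ∈ Icc 0 T, HasDerivAt (fun s => SS s j / pd j ψ (Θ s) ^ 2) 0 t := by
    intro t ht
    have hPt := (hP _).hasDerivAt_comp_sum_pd (hΘ t ht)
    refine ((hSS t ht).div (hPt.pow 2) (pow_ne_zero _ (hPne t ht))).congr_deriv ?_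
    have hsum : ∑ l, β l * kbar ψ j l (Θ t) * SI t l * SS t j / S t =
        SS t j * ∑ l, β l * kbar ψ j l (Θ t) * (SI t l / (αS * ψ (Θ t))) := by
      rw [Finset.mul_sum, hSψ t ht]
      exact Finset.sum_congr rfl fun l _ => by ring
    rw [hsum, sum_mul_kbar_mul_div (hψ t ht), Pi.pow_apply]
    field_simp [hPne t ht]
    ring
  intro t ht
  have h0 : (0 : ℝ) ∈ Icc 0 T := ⟨le_rfl, ht.1.trans ht.2⟩
  have h := constant_of_hasDerivAt_zero hderiv t ht
  rw [hSS0] at h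
  field_simp [hPne t ht, hPne 0 h0] at h
  linarith

theorem hasDerivAt_SI_div_mul_pd_comp {j : Fin r} {t : ℝ} (hP : DifferentiableAt ℝ (pd j ψ) (Θ t))
    (hψ : ψ (Θ t) ≠ 0) (hPt : pd j ψ (Θ t) ≠ 0) (hαS : αS ≠ 0)
    (hSψ : S t = αS * ψ (Θ t)) (hSS : SS t j = K * pd j ψ (Θ t) ^ 2)
    (hSI : HasDerivAt (fun s => SI s j) ((∑ l, β l * kbar ψ j l (Θ t) * (SI t l / S t)
      * (SS t j - SI t j)) - (β j + γ) * SI t j) t)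
    (hΘ : HasDerivAt Θ (fun l => -(β l * SI t l) / (αS * pd l ψ (Θ t))) t) :
    HasDerivAt (fun s => SI s j / (αS * pd j ψ (Θ s)))
      (-(K / αS * ∑ l, pd l (pd j ψ) (Θ t) * (-(β l * SI t l) / (αS * pd l ψ (Θ t))))
        - (β j + γ) * (SI t j / (αS * pd j ψ (Θ t)))) t := by
  have hPd := (hP.hasDerivAt_comp_sum_pd hΘ).const_mul αS
  refine (hSI.div hPd (mul_ne_zero hαS hPt)).congr_deriv ?_
  have hsum : ∑ l, β l * kbar ψ j l (Θ t) * (SI t l / S t) * (SS t j - SI t j) =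
      (∑ l, β l * kbar ψ j l (Θ t) * (SI t l / (αS * ψ (Θ t)))) * (SS t j - SI t j) := by
    rw [Finset.sum_mul, hSψ]
  rw [hsum, sum_mul_kbar_mul_div hψ, hSS]
  field_simp
  ring

theorem neg_mul_SI_div_eq_edge_based {j : Fin r} {c αI αR : ℝ} (hP : Differentiable ℝ (pd j ψ))
    (hψ : ∀ t ∈ Icc 0 T, ψ (Θ t) ≠ 0) (hPne : ∀ t ∈ Icc 0 T, pd j ψ (Θ t) ≠ 0)
    (hαS : αS ≠ 0) (hc : c ≠ 0) (hsum : αS + αI + αR = 1)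
    (hSψ : ∀ t ∈ Icc 0 T, S t = αS * ψ (Θ t))
    (hSS : ∀ t ∈ Icc 0 T, SS t j = αS ^ 2 / c * pd j ψ (Θ t) ^ 2)
    (hSI : ∀ t ∈ Icc 0 T, HasDerivAt (fun s => SI s j) ((∑ l, β l * kbar ψ j l (Θ t)
      * (SI t l / S t) * (SS t j - SI t j)) - (β j + γ) * SI t j) t)
    (hΘ : ∀ t ∈ Icc 0 T, HasDerivAt Θ (fun l => -(β l * SI t l) / (αS * pd l ψ (Θ t))) t)
    (hSI0 : SI 0 j = αS * αI * c) (hΘ0 : Θ 0 j = 1) (hP0 : pd j ψ (Θ 0) = c) :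
    ∀ t ∈ Icc 0 T, -(β j * SI t j) / (αS * pd j ψ (Θ t)) =
      -(β j * Θ t j) + β j * αS * pd j ψ (Θ t) / c + γ * (1 - Θ t j) + β j * αR := by
  have hderiv : ∀ t ∈ Icc 0 T, HasDerivAt (fun s => β j * (SI s j / (αS * pd j ψ (Θ s)))
      - β j * Θ s j + β j * αS * pd j ψ (Θ s) / c + γ * (1 - Θ s j) + β j * αR) 0 t := by
    intro t ht
    have hQ := hasDerivAt_SI_div_mul_pd_comp (hP _) (hψ t ht) (hPne t ht) hαS (hSψ t ht)
      (hSS t ht) (hSI t ht) (hΘ t ht)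
    have hΘj := hasDerivAt_pi.1 (hΘ t ht) j
    have hPt := (hP _).hasDerivAt_comp_sum_pd (hΘ t ht)
    refine ((((hQ.const_mul (β j)).sub (hΘj.const_mul (β j))).add
      ((hPt.const_mul (β j * αS)).div_const c)).add ((hΘj.const_sub 1).const_mul γ)).add_const
      (β j * αR) |>.congr_deriv ?_
    field_simp [hPne t ht]
    ring
  intro t ht
  have h := constant_of_hasDerivAt_zero hderiv t ht
  rw [hSI0, hΘ0, hP0, mul_div_mul_right _ _ hc, mul_div_cancel_left₀ _ hαS,
    mul_div_cancel_right₀ _ hc] at h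
  rw [neg_div, mul_div_assoc]
  linear_combination -h - β j * hsum

end EdgeBased

theorem edge_based_equivalence_general (r : ℕ) (ψ : (Fin r → ℝ) → ℝ)
    (hC : ContDiff ℝ 2 ψ) (hψ1 : ψ (fun _ => 1) = 1)
    (β : Fin r → ℝ) (γ αS αI αR : ℝ)
    (hαS : 0 < αS) (hsum : αS + αI + αR = 1)
    (T : ℝ)
    (S : ℝ → ℝ) (SI SS : ℝ → Fin r → ℝ) (Θ : ℝ → Fin r → ℝ)
    (hψpos : ∀ t ∈ Set.Icc (0 : ℝ) T, 0 < ψ (Θ t))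
    (hpdne : ∀ t ∈ Set.Icc (0 : ℝ) T, ∀ j, pd j ψ (Θ t) ≠ 0)
    (hpd1 : ∀ j : Fin r, 0 < pd j ψ (fun _ => 1))
    (hS : ∀ t ∈ Set.Icc (0 : ℝ) T, HasDerivAt S (-(∑ l, β l * SI t l)) t)
    (hSI : ∀ t ∈ Set.Icc (0 : ℝ) T, ∀ j, HasDerivAt (fun s => SI s j)
        ((∑ l, β l * (ψ (Θ t) * pd l (pd j ψ) (Θ t) / (pd j ψ (Θ t) * pd l ψ (Θ t)))
            * (SI t l / S t) * (SS t j - SI t j)) - (β j + γ) * SI t j) t)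
    (hSS : ∀ t ∈ Set.Icc (0 : ℝ) T, ∀ j, HasDerivAt (fun s => SS s j)
        (-2 * ∑ l, β l * (ψ (Θ t) * pd l (pd j ψ) (Θ t) / (pd j ψ (Θ t) * pd l ψ (Θ t)))
            * SI t l * SS t j / S t) t)
    (hΘ : ∀ t ∈ Set.Icc (0 : ℝ) T, ∀ j, HasDerivAt (fun s => Θ s j)
        (-(β j * SI t j) / (αS * pd j ψ (Θ t))) t)
    (hS0 : S 0 = αS)
    (hSI0 : ∀ j, SI 0 j = αS * αI * pd j ψ (fun _ => 1))
    (hSS0 : ∀ j, SS 0 j = αS ^ 2 * pd j ψ (fun _ => 1))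
    (hΘ0 : Θ 0 = fun _ => 1) :
    ∀ t ∈ Set.Icc (0 : ℝ) T, ∀ j, HasDerivAt (fun s => Θ s j)
      (-(β j * Θ t j) + β j * αS * pd j ψ (Θ t) / pd j ψ (fun _ => 1)
        + γ * (1 - Θ t j) + β j * αR) t := by
  have hψ : Differentiable ℝ ψ := hC.differentiable (by norm_num)
  have hpd : ∀ j, Differentiable ℝ (pd j ψ) := fun j =>
    (contDiff_pd (m := 1) hC (by norm_num) j).differentiable one_ne_zero
  have hψne : ∀ t ∈ Icc 0 T, ψ (Θ t) ≠ 0 := fun t ht => (hψpos t ht).ne'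
  have hΘv : ∀ t ∈ Icc 0 T, HasDerivAt Θ (fun l => -(β l * SI t l) / (αS * pd l ψ (Θ t))) t :=
    fun t ht => hasDerivAt_pi.2 (hΘ t ht)
  have hSψ := S_eq_mul_comp hψ hαS.ne' hpdne hS hΘv (by rw [hS0, hΘ0, hψ1, mul_one])
  intro t ht j
  have hc := (hpd1 j).ne'
  have hSSψ := SS_eq_mul_sq_pd_comp (K := αS ^ 2 / pd j ψ (fun _ => 1)) (hpd j) hψne
    (fun t ht => hpdne t ht j) hSψ (fun t ht => hSS t ht j) hΘv
    (by rw [hSS0, hΘ0]; field_simp)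
  exact (hΘ t ht j).congr_deriv <| neg_mul_SI_div_eq_edge_based (hpd j) hψne
    (fun t ht => hpdne t ht j) hαS.ne' hc hsum hSψ hSSψ (fun t ht => hSI t ht j) hΘv
    (hSI0 j) (by rw [hΘ0]) (by rw [hΘ0]) t ht

/-- Corollary 1 (static multilayer graph): the large graph limit of the stochastic SIR
process with multiple modes of transmission is equivalent to the Miller–Volz edge-based
model; the per-layer no-transmission probabilities `Θⱼ` satisfy
`Θⱼ' = −βⱼΘⱼ + βⱼα_S·∂ⱼψ(Θ)/∂ⱼψ(𝟏) + γ(1−Θⱼ) + βⱼα_R`.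
Here `κ̄_{jl}(x) = ψ(x)·∂²_{jl}ψ(x)/(∂ⱼψ(x)·∂ₗψ(x))`. -/
theorem edge_based_equivalence (r : ℕ) (hr : 1 ≤ r) (ψ : (Fin r → ℝ) → ℝ)
    (hC : ContDiff ℝ 2 ψ) (hψ1 : ψ (fun _ => 1) = 1)
    (β : Fin r → ℝ) (γ αS αI αR : ℝ) (hγ : 0 ≤ γ)
    (hαS : 0 < αS) (hαI : 0 < αI) (hαR : 0 ≤ αR) (hsum : αS + αI + αR = 1)
    (T : ℝ) (hT : 0 < T)
    (S : ℝ → ℝ) (SI SS : ℝ → Fin r → ℝ) (Θ : ℝ → Fin r → ℝ)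
    (hSpos : ∀ t ∈ Set.Icc (0 : ℝ) T, 0 < S t)
    (hψpos : ∀ t ∈ Set.Icc (0 : ℝ) T, 0 < ψ (Θ t))
    (hpdne : ∀ t ∈ Set.Icc (0 : ℝ) T, ∀ j, pd j ψ (Θ t) ≠ 0)
    (hpd1 : ∀ j : Fin r, 0 < pd j ψ (fun _ => 1))
    (hS : ∀ t ∈ Set.Icc (0 : ℝ) T, HasDerivAt S (-(∑ l, β l * SI t l)) t)
    (hSI : ∀ t ∈ Set.Icc (0 : ℝ) T, ∀ j, HasDerivAt (fun s => SI s j)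
        ((∑ l, β l * (ψ (Θ t) * pd l (pd j ψ) (Θ t) / (pd j ψ (Θ t) * pd l ψ (Θ t)))
            * (SI t l / S t) * (SS t j - SI t j)) - (β j + γ) * SI t j) t)
    (hSS : ∀ t ∈ Set.Icc (0 : ℝ) T, ∀ j, HasDerivAt (fun s => SS s j)
        (-2 * ∑ l, β l * (ψ (Θ t) * pd l (pd j ψ) (Θ t) / (pd j ψ (Θ t) * pd l ψ (Θ t)))
            * SI t l * SS t j / S t) t)
    (hΘ : ∀ t ∈ Set.Icc (0 : ℝ) T, ∀ j, HasDerivAt (fun s => Θ s j)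
        (-(β j * SI t j) / (αS * pd j ψ (Θ t))) t)
    (hS0 : S 0 = αS)
    (hSI0 : ∀ j, SI 0 j = αS * αI * pd j ψ (fun _ => 1))
    (hSS0 : ∀ j, SS 0 j = αS ^ 2 * pd j ψ (fun _ => 1))
    (hΘ0 : Θ 0 = fun _ => 1) :
    ∀ t ∈ Set.Icc (0 : ℝ) T, ∀ j, HasDerivAt (fun s => Θ s j)
      (-(β j * Θ t j) + β j * αS * pd j ψ (Θ t) / pd j ψ (fun _ => 1)
        + γ * (1 - Θ t j) + β j * αR) t :=
  edge_based_equivalence_general r ψ hC hψ1 β γ αS αI αR hαS hsum T S SI SS Θ hψpos hpdne hpd1 hS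
    hSI hSS hΘ hS0 hSI0 hSS0 hΘ0
end

section
/- Let β_C, β_H, γ, η > 0, δ ≥ 0, μ_C, μ_H ≥ 0, α_S > 0, α_I ≥ 0, and T > 0. Define ℛ_0 = β_C·μ_C/(β_C+γ+δ) + β_H·μ_H·η/((β_H+γ)(η+γ)). Suppose S, Q_C, Q_H, Q̃_H : [0,T] → ℝ are differentiable with S(t) > 0 for all t ∈ [0,T], and satisfy: S' = −(β_C·Q_C + β_H·Q_H)·S; Q_C' = μ_C·(β_C·Q_C + β_H·Q_H)·S − (β_C+γ+δ)·Q_C; Q_H' = −(β_H+γ)·Q_H + η·Q̃_H; Q̃_H' = μ_H·(β_C·Q_C + β_H·Q_H)·S − (η+γ)·Q̃_H; with initial conditions S(0) = α_S, Q_C(0) = μ_C·α_I, Q_H(0) = 0, Q̃_H(0) = μ_H·α_I. Then for all t ∈ [0,T]: log(S(t)/α_S) = −ℛ_0·(α_S + α_I − S(t)) + (β_C/(β_C+γ+δ))·Q_C(t) + (β_H/(β_H+γ))·Q_H(t) + (β_H·η/((β_H+γ)(η+γ)))·Q̃_H(t). -/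
/-!
Along solutions, `log S` decreases at rate `λ = βC QC + βH QH`, while each `Q` decays at its
own rate; `QC` and `QtH` are fed by `μC λ S` and `μH λ S`, and `QH` by `η QtH`. Choosing
coefficients `cC, cH, ctH` so that the decay rates times `cC, cH, ctH` are `βC, βH, η cH`,
the combination `log S - ℛ₀ S - cC QC - cH QH - ctH QtH` has zero derivative, where
`ℛ₀ = cC μC + ctH μH` absorbs the source terms. Hence it is constant on `[0, T]`, and
evaluating it at `0` gives the invariant.
-/

open Set Real

theorem eq_of_forall_hasDerivAt_zero {E : Type*} [NormedAddCommGroup E] [NormedSpace ℝ E]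
    {f : ℝ → E} {a b : ℝ} (hf : ∀ x ∈ Icc a b, HasDerivAt f 0 x) :
    ∀ x ∈ Icc a b, f x = f a :=
  constant_of_has_deriv_right_zero (fun x hx => (hf x hx).continuousAt.continuousWithinAt)
    fun x hx => (hf x (Ico_subset_Icc_self hx)).hasDerivWithinAt

theorem hasDerivAt_log_sub_linear_combination_eq_zero {S QC QH QtH : ℝ → ℝ}
    {t βC βH η μC μH kC kH ktH cC cH ctH : ℝ}
    (hcC : cC * kC = βC) (hcH : cH * kH = βH) (hctH : ctH * ktH = cH * η) (hSt : S t ≠ 0)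
    (hS : HasDerivAt S (-((βC * QC t + βH * QH t) * S t)) t)
    (hQC : HasDerivAt QC (μC * (βC * QC t + βH * QH t) * S t - kC * QC t) t)
    (hQH : HasDerivAt QH (-(kH * QH t) + η * QtH t) t)
    (hQtH : HasDerivAt QtH (μH * (βC * QC t + βH * QH t) * S t - ktH * QtH t) t) :
    HasDerivAt (fun s => log (S s) - (cC * μC + ctH * μH) * S s - cC * QC s - cH * QH s
      - ctH * QtH s) 0 t := by
  refine ((((hS.log hSt).sub (hS.const_mul (cC * μC + ctH * μH))).sub (hQC.const_mul cC)).sub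
    (hQH.const_mul cH)).sub (hQtH.const_mul ctH) |>.congr_deriv ?_
  field_simp
  linear_combination QC t * hcC + QH t * hcH + QtH t * hctH

theorem community_healthcare_invariant_general (βC βH γ η δ μC μH αS αI T : ℝ)
    (hβC : 0 < βC) (hβH : 0 < βH) (hγ : 0 < γ) (hη : 0 < η) (hδ : 0 ≤ δ)
    (hαS : 0 < αS)
    (S QC QH QtH : ℝ → ℝ)
    (hSpos : ∀ t ∈ Set.Icc (0 : ℝ) T, 0 < S t)
    (hS : ∀ t ∈ Set.Icc (0 : ℝ) T, HasDerivAt S (-((βC * QC t + βH * QH t) * S t)) t)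
    (hQC : ∀ t ∈ Set.Icc (0 : ℝ) T, HasDerivAt QC
        (μC * (βC * QC t + βH * QH t) * S t - (βC + γ + δ) * QC t) t)
    (hQH : ∀ t ∈ Set.Icc (0 : ℝ) T, HasDerivAt QH
        (-((βH + γ) * QH t) + η * QtH t) t)
    (hQtH : ∀ t ∈ Set.Icc (0 : ℝ) T, HasDerivAt QtH
        (μH * (βC * QC t + βH * QH t) * S t - (η + γ) * QtH t) t)
    (hS0 : S 0 = αS) (hQC0 : QC 0 = μC * αI) (hQH0 : QH 0 = 0)
    (hQtH0 : QtH 0 = μH * αI) :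
    ∀ t ∈ Set.Icc (0 : ℝ) T,
      Real.log (S t / αS)
        = -((βC * μC / (βC + γ + δ) + βH * μH * η / ((βH + γ) * (η + γ)))
              * (αS + αI - S t))
          + (βC / (βC + γ + δ)) * QC t + (βH / (βH + γ)) * QH t
          + (βH * η / ((βH + γ) * (η + γ))) * QtH t := by
  intro t ht
  have hkC : βC + γ + δ ≠ 0 := by positivity
  have hkH : βH + γ ≠ 0 := by positivity
  have hktH : η + γ ≠ 0 := by positivity
  have hconst := eq_of_forall_hasDerivAt_zero (fun x hx =>
    hasDerivAt_log_sub_linear_combination_eq_zero (ctH := βH * η / ((βH + γ) * (η + γ)))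
      (div_mul_cancel₀ βC hkC) (div_mul_cancel₀ βH hkH) (by field_simp) (hSpos x hx).ne'
      (hS x hx) (hQC x hx) (hQH x hx) (hQtH x hx)) t ht
  simp only [hS0, hQC0, hQH0, hQtH0] at hconst
  rw [log_div (hSpos t ht).ne' hαS.ne']
  linear_combination hconst

/-- Invariant (CHinv) of the community-healthcare model in the case of independent
layers with Poisson degree distributions, in the transformed variables
`Q_C = [SI]_C/S`, `Q_H = [SI]_H/S`, `Q̃_H = [S̃I]_H/S`. -/
theorem community_healthcare_invariant (βC βH γ η δ μC μH αS αI T : ℝ)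
    (hβC : 0 < βC) (hβH : 0 < βH) (hγ : 0 < γ) (hη : 0 < η) (hδ : 0 ≤ δ)
    (hμC : 0 ≤ μC) (hμH : 0 ≤ μH) (hαS : 0 < αS) (hαI : 0 ≤ αI) (hT : 0 < T)
    (S QC QH QtH : ℝ → ℝ)
    (hSpos : ∀ t ∈ Set.Icc (0 : ℝ) T, 0 < S t)
    (hS : ∀ t ∈ Set.Icc (0 : ℝ) T, HasDerivAt S (-((βC * QC t + βH * QH t) * S t)) t)
    (hQC : ∀ t ∈ Set.Icc (0 : ℝ) T, HasDerivAt QC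
        (μC * (βC * QC t + βH * QH t) * S t - (βC + γ + δ) * QC t) t)
    (hQH : ∀ t ∈ Set.Icc (0 : ℝ) T, HasDerivAt QH
        (-((βH + γ) * QH t) + η * QtH t) t)
    (hQtH : ∀ t ∈ Set.Icc (0 : ℝ) T, HasDerivAt QtH
        (μH * (βC * QC t + βH * QH t) * S t - (η + γ) * QtH t) t)
    (hS0 : S 0 = αS) (hQC0 : QC 0 = μC * αI) (hQH0 : QH 0 = 0)
    (hQtH0 : QtH 0 = μH * αI) :
    ∀ t ∈ Set.Icc (0 : ℝ) T,
      Real.log (S t / αS)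
        = -((βC * μC / (βC + γ + δ) + βH * μH * η / ((βH + γ) * (η + γ)))
              * (αS + αI - S t))
          + (βC / (βC + γ + δ)) * QC t + (βH / (βH + γ)) * QH t
          + (βH * η / ((βH + γ) * (η + γ))) * QtH t :=
  community_healthcare_invariant_general βC βH γ η δ μC μH αS αI T hβC hβH hγ hη hδ hαS S QC QH QtH
    hSpos hS hQC hQH hQtH hS0 hQC0 hQH0 hQtH0
end
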